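/- For every u in the open interval (1/√3, √3), the quantity 4 − φ₁(u) − φ₂(u) satisfies (−2 + 4√2)/7 ≤ 4 − φ₁(u) − φ₂(u) ≤ 1. -/

import Mathlib

/-!
With `s = √(1 + u²)` and `m = mParam u`, one finds `4 - φ₁ - φ₂ = 2 - R` where
`R = 8u(m+1)(mu²+1) / (s²(8mu + sm² + us))`, and
`R - 1 = (m²(8u³ - s³) + u(8 - s³)) / (s²(8mu + sm² + us))`, which is nonnegative on the interval
since there `s < 2u` and `s < 2`; hence `4 - φ₁ - φ₂ ≤ 1`.

For the lower bound, `u ↦ 1/u` sends `m` to `1/m` and leaves `R` invariant, so `R - 1` is a rational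
function of `x = u + 1/u ∈ [2, 4/√3]` and `y = s(1 + u)/u = √(x² + 2x)`. The maximum
`R = (16 - 4√2)/7` is attained at `x = 2` (`u = 1`). The defect, multiplied by `y + 2√2`, factors as
`(x - 2)` times a polynomial expression whose sign is read off from its Taylor expansion at `x = 2`.
-/

noncomputable def mParam (u : ℝ) : ℝ :=
  (8 * u ^ 3 - u ^ 3 * (1 + u ^ 2) ^ ((3 : ℝ) / 2)) /
    (8 * u ^ 3 - (1 + u ^ 2) ^ ((3 : ℝ) / 2))

noncomputable def alphaParam (u : ℝ) : ℝ :=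
  Real.sqrt (2 * mParam u * u ^ 2 + 2)

noncomputable def muParam (u : ℝ) : ℝ :=
  4 * mParam u * alphaParam u / Real.sqrt (1 + u ^ 2) +
    alphaParam u * (mParam u) ^ 2 / (2 * u) + alphaParam u / 2

noncomputable def phi1 (u : ℝ) : ℝ :=
  1 + 2 * (mParam u + 1) * (alphaParam u) ^ 3 * (2 - u ^ 2) /
    (muParam u * (1 + u ^ 2) ^ ((5 : ℝ) / 2))

noncomputable def phi2 (u : ℝ) : ℝ :=
  1 + 2 * (mParam u + 1) * (alphaParam u) ^ 3 * (2 * u ^ 2 - 1) /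
    (muParam u * (1 + u ^ 2) ^ ((5 : ℝ) / 2))

noncomputable def psi1 (u : ℝ) : ℝ :=
  1 + (4 * alphaParam u / muParam u) *
    ((2 * (mParam u) ^ 2 * u ^ 4 + (6 * mParam u - (mParam u) ^ 2 - 1) * u ^ 2 + 2) /
        (1 + u ^ 2) ^ ((5 : ℝ) / 2) -
      mParam u * u ^ 2 / 8 - mParam u / (8 * u ^ 3))

noncomputable def psi2 (u : ℝ) : ℝ :=
  1 + (4 * alphaParam u / muParam u) *
    ((-(mParam u) ^ 2 * u ^ 4 + (2 * (mParam u) ^ 2 - 6 * mParam u + 2) * u ^ 2 - 1) /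
        (1 + u ^ 2) ^ ((5 : ℝ) / 2) +
      mParam u * u ^ 2 / 4 + mParam u / (4 * u ^ 3))

open Real

noncomputable def rhombusRatio (m u s : ℝ) : ℝ :=
  8 * u * (m + 1) * (m * u ^ 2 + 1) / (s ^ 2 * (8 * m * u + s * m ^ 2 + u * s))

lemma rhombusRatio_sub_one {m u s : ℝ} (hu : 0 < u) (hs : 0 < s) (hm : 0 ≤ m)
    (hs2 : s ^ 2 = 1 + u ^ 2) :
    rhombusRatio m u s - 1 =
      (m ^ 2 * (8 * u ^ 3 - s ^ 3) + u * (8 - s ^ 3)) /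
        (s ^ 2 * (8 * m * u + s * m ^ 2 + u * s)) := by
  have : 0 < s ^ 2 * (8 * m * u + s * m ^ 2 + u * s) := by positivity
  rw [rhombusRatio, div_sub_one this.ne']
  congr 1
  linear_combination (-8 * m * u) * hs2

lemma one_le_rhombusRatio {m u s : ℝ} (hu : 0 < u) (hs : 0 < s) (hm : 0 ≤ m)
    (hs2 : s ^ 2 = 1 + u ^ 2) (hsu : s ^ 3 ≤ 8 * u ^ 3) (hs8 : s ^ 3 ≤ 8) :
    1 ≤ rhombusRatio m u s := by
  have hsu' := sub_nonneg.2 hsu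
  have hs8' := sub_nonneg.2 hs8
  have : 0 ≤ (m ^ 2 * (8 * u ^ 3 - s ^ 3) + u * (8 - s ^ 3)) /
      (s ^ 2 * (8 * m * u + s * m ^ 2 + u * s)) := by positivity
  linarith [rhombusRatio_sub_one hu hs hm hs2]

section Symmetrization

variable {u s x y : ℝ}

lemma cube_mul_one_add_eq (hs2 : s ^ 2 = 1 + u ^ 2) (hx : u * x = 1 + u ^ 2)
    (hy : u * y = s * (1 + u)) : s ^ 3 * (1 + u) = u ^ 2 * x * y := by
  linear_combination u * y * (hs2 - hx) - s ^ 2 * hy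

lemma cube_mul_one_add_cube_eq (hs2 : s ^ 2 = 1 + u ^ 2) (hx : u * x = 1 + u ^ 2)
    (hy : u * y = s * (1 + u)) : s ^ 3 * (1 + u ^ 3) = u ^ 3 * x * y * (x - 1) := by
  linear_combination (1 - u + u ^ 2) * cube_mul_one_add_eq hs2 hx hy - u ^ 2 * x * y * hx

lemma cube_mul_one_add_pow_five_eq (hs2 : s ^ 2 = 1 + u ^ 2) (hx : u * x = 1 + u ^ 2)
    (hy : u * y = s * (1 + u)) :
    s ^ 3 * (1 + u ^ 5) = u ^ 4 * x * y * (x ^ 2 - x - 1) := by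
  linear_combination (1 - u + u ^ 2 - u ^ 3 + u ^ 4) * cube_mul_one_add_eq hs2 hx hy
    - u ^ 2 * x * y * (u * x + 1 + u ^ 2 - u) * hx

lemma cube_sub_mul_cube_sub_eq (hs2 : s ^ 2 = 1 + u ^ 2) (hx : u * x = 1 + u ^ 2)
    (hy : u * y = s * (1 + u)) :
    (8 - s ^ 3) * (8 * u ^ 3 - s ^ 3) = u ^ 3 * (64 + x ^ 3 - 8 * x * (x - 1) * y) := by
  linear_combination -8 * cube_mul_one_add_cube_eq hs2 hx hy
    + (s ^ 4 + s ^ 2 * u * x + u ^ 2 * x ^ 2) * (hs2 - hx)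

lemma pow_five_mul_cube_sub_add_eq (hs2 : s ^ 2 = 1 + u ^ 2) (hx : u * x = 1 + u ^ 2)
    (hy : u * y = s * (1 + u)) :
    u ^ 5 * (8 - s ^ 3) + (8 * u ^ 3 - s ^ 3) = u ^ 4 * (x * (8 - (x ^ 2 - x - 1) * y)) := by
  linear_combination -cube_mul_one_add_pow_five_eq hs2 hx hy - 8 * u ^ 3 * hx

lemma cube_mul_pow_five_mul_sq_add_sq_eq (hs2 : s ^ 2 = 1 + u ^ 2) (hx : u * x = 1 + u ^ 2)
    (hy : u * y = s * (1 + u)) :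
    s ^ 3 * (u ^ 5 * (8 - s ^ 3) ^ 2 + (8 * u ^ 3 - s ^ 3) ^ 2) =
      u ^ 7 * (64 * x * y - 16 * x ^ 4 + x ^ 4 * (x ^ 2 - x - 1) * y) := by
  linear_combination 64 * u ^ 5 * cube_mul_one_add_eq hs2 hx hy
    + s ^ 6 * cube_mul_one_add_pow_five_eq hs2 hx hy + 16 * u ^ 3 * s ^ 6 * hx
    + (u ^ 4 * x * y * (x ^ 2 - x - 1) - 16 * u ^ 4 * x) *
      (s ^ 4 + s ^ 2 * u * x + u ^ 2 * x ^ 2) * (hs2 - hx)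

def excessNum (x y : ℝ) : ℝ :=
  (64 + x ^ 3 - 8 * x * (x - 1) * y) * (x * (8 - (x ^ 2 - x - 1) * y))

def excessDen (x y : ℝ) : ℝ :=
  512 * x - 8 * x ^ 4 + (x ^ 6 - x ^ 5 - x ^ 4 - 64 * x ^ 3 + 64 * x ^ 2 + 64 * x) * y

lemma rhombusRatio_le_of_excessNum_le {c : ℝ} (hu : 0 < u) (hs : 0 < s)
    (hs2 : s ^ 2 = 1 + u ^ 2) (hx : u * x = 1 + u ^ 2) (hy : u * y = s * (1 + u))
    (hsu : s ^ 3 < 8 * u ^ 3) (hs8 : s ^ 3 < 8) (h : excessNum x y ≤ c * excessDen x y) :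
    rhombusRatio (u ^ 3 * (8 - s ^ 3) / (8 * u ^ 3 - s ^ 3)) u s ≤ 1 + c := by
  set A := 8 - s ^ 3
  set Q := 8 * u ^ 3 - s ^ 3
  set m := u ^ 3 * A / Q
  have hA : 0 < A := sub_pos.2 hs8
  have hQ : 0 < Q := sub_pos.2 hsu
  have hm : 0 ≤ m := by positivity
  have hnum : m ^ 2 * Q + u * A = u ^ 8 * excessNum x y / Q ^ 2 := calc
    m ^ 2 * Q + u * A = u * (A * Q) * (u ^ 5 * A + Q) / Q ^ 2 := by
      simp only [m]; field_simp
    _ = u ^ 8 * excessNum x y / Q ^ 2 := by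
      rw [cube_sub_mul_cube_sub_eq hs2 hx hy, pow_five_mul_cube_sub_add_eq hs2 hx hy, excessNum]
      ring
  have hden : s ^ 2 * (8 * m * u + s * m ^ 2 + u * s) = u ^ 8 * excessDen x y / Q ^ 2 := calc
    s ^ 2 * (8 * m * u + s * m ^ 2 + u * s) =
        u * (8 * s ^ 2 * u ^ 3 * (A * Q) + s ^ 3 * (u ^ 5 * A ^ 2 + Q ^ 2)) / Q ^ 2 := by
      simp only [m]; field_simp; ring
    _ = u ^ 8 * excessDen x y / Q ^ 2 := by
      rw [cube_sub_mul_cube_sub_eq hs2 hx hy, cube_mul_pow_five_mul_sq_add_sq_eq hs2 hx hy,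
        hs2, ← hx, excessDen]
      ring
  have hpos : 0 < s ^ 2 * (8 * m * u + s * m ^ 2 + u * s) := by positivity
  rw [← sub_le_iff_le_add', rhombusRatio_sub_one hu hs hm hs2, div_le_iff₀ hpos, hnum, hden,
    mul_div_assoc', div_le_div_iff_of_pos_right (by positivity)]
  nlinarith [mul_le_mul_of_nonneg_left h (pow_nonneg hu.le 8)]

end Symmetrization

/-- The defect `(9 - 4√2) * excessDen x y - 7 * excessNum x y` equals
`(x - 2) * gapCoeffX x + gapCoeffY x * (y - 2√2)` modulo `y² = x² + 2x`. -/
noncomputable def gapCoeffX (x : ℝ) : ℝ :=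
  896 * √2 * x + (512 + 768 * √2) * x ^ 2 + (-200 + 64 * √2) * x ^ 3
    + (-16 + 32 * √2) * x ^ 4 + (-128 + 32 * √2) * x ^ 5 - 56 * x ^ 6

noncomputable def gapCoeffY (x : ℝ) : ℝ :=
  128 * x - 320 * x ^ 2 + 320 * x ^ 3 - 16 * x ^ 4 - 16 * x ^ 5 + 16 * x ^ 6
    + √2 * (-256 * x - 256 * x ^ 2 + 256 * x ^ 3 + 4 * x ^ 4 + 4 * x ^ 5 - 4 * x ^ 6)

lemma gapCoeffY_nonneg {x : ℝ} (hx : 2 ≤ x) : 0 ≤ gapCoeffY x := by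
  have ht : 0 ≤ x - 2 := by linarith
  have hr : 0 ≤ √2 := sqrt_nonneg 2
  have hr' : 0 ≤ 3 / 2 - √2 := by linarith [sqrt_two_lt_three_halves]
  unfold gapCoeffY
  linarith [mul_nonneg hr ht, mul_nonneg hr (pow_nonneg ht 2), mul_nonneg hr' (pow_nonneg ht 3),
    mul_nonneg hr' (pow_nonneg ht 4), mul_nonneg hr' (pow_nonneg ht 5),
    mul_nonneg hr' (pow_nonneg ht 6), pow_nonneg ht 2, pow_nonneg ht 3, pow_nonneg ht 4,
    pow_nonneg ht 5, pow_nonneg ht 6]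

lemma sqrt_two_mul_gapCoeffX_add_gapCoeffY_nonneg {x : ℝ} (hx : 2 ≤ x) (hx' : x ≤ 7 / 3) :
    0 ≤ √2 * (x + 2) * gapCoeffX x + (x + 4) * gapCoeffY x := by
  have ht : 0 ≤ x - 2 := by linarith
  have hr' : 0 ≤ 3 / 2 - √2 := by linarith [sqrt_two_lt_three_halves]
  have hpow (n : ℕ) : (x - 2) ^ n ≤ (1 / 3) ^ n := pow_le_pow_left₀ ht (by linarith) n
  have htaylor : √2 * (x + 2) * gapCoeffX x + (x + 4) * gapCoeffY x =
      66048 + 105984 * (x - 2) + 79104 * (x - 2) ^ 2 + 38208 * (x - 2) ^ 3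
        + 12832 * (x - 2) ^ 4 + 2800 * (x - 2) ^ 5 + 336 * (x - 2) ^ 6 + 16 * (x - 2) ^ 7
      - √2 * (27264 + 85632 * (x - 2) + 114976 * (x - 2) ^ 2 + 82800 * (x - 2) ^ 3
        + 34400 * (x - 2) ^ 4 + 8316 * (x - 2) ^ 5 + 1092 * (x - 2) ^ 6 + 60 * (x - 2) ^ 7) := by
    unfold gapCoeffX gapCoeffY
    linear_combination (x + 2) * (896 * x + 768 * x ^ 2 + 64 * x ^ 3 + 32 * x ^ 4 + 32 * x ^ 5) *
      sq_sqrt (show (0 : ℝ) ≤ 2 by norm_num)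
  rw [htaylor]
  -- every coefficient of `(x - 2) ^ k` with `k ≥ 1` stays negative when `√2` is replaced by `3/2`
  linarith [mul_nonneg hr' ht, mul_nonneg hr' (pow_nonneg ht 2), mul_nonneg hr' (pow_nonneg ht 3),
    mul_nonneg hr' (pow_nonneg ht 4), mul_nonneg hr' (pow_nonneg ht 5),
    mul_nonneg hr' (pow_nonneg ht 6), mul_nonneg hr' (pow_nonneg ht 7), hpow 1, hpow 2, hpow 3,
    hpow 4, hpow 5, hpow 6, hpow 7, pow_nonneg ht 2, pow_nonneg ht 3, pow_nonneg ht 4,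
    pow_nonneg ht 5, pow_nonneg ht 6, pow_nonneg ht 7]

lemma seven_mul_excessNum_le {x y : ℝ} (hx : 2 ≤ x) (hx' : x ≤ 7 / 3) (hy : y ^ 2 = x ^ 2 + 2 * x)
    (hy0 : 0 ≤ y) : 7 * excessNum x y ≤ (9 - 4 * √2) * excessDen x y := by
  have hr2 : √2 ^ 2 = 2 := sq_sqrt (by norm_num)
  have hr : 0 < √2 := by positivity
  have hyx : y ≤ √2 * x := by
    refine (pow_le_pow_iff_left₀ hy0 (by positivity) two_ne_zero).1 ?_
    rw [mul_pow, hr2]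
    nlinarith
  have hfactor : 0 ≤ gapCoeffX x * (y + 2 * √2) + gapCoeffY x * (x + 4) := by
    rcases le_total 0 (gapCoeffX x) with hC | hC
    · have := gapCoeffY_nonneg hx
      positivity
    · nlinarith [sqrt_two_mul_gapCoeffX_add_gapCoeffY_nonneg hx hx',
        mul_le_mul_of_nonpos_left hyx hC]
  have hdefect : ((9 - 4 * √2) * excessDen x y - 7 * excessNum x y) * (y + 2 * √2) =
      (x - 2) * (gapCoeffX x * (y + 2 * √2) + gapCoeffY x * (x + 4)) := by
    linear_combination (norm := (unfold excessNum excessDen gapCoeffX gapCoeffY; ring))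
      (gapCoeffY x - 56 * x ^ 2 * (x ^ 3 - 2 * x ^ 2 + 1) * (y + 2 * √2)) * hy
      + (-4 * (128 * x - 320 * x ^ 2 + 320 * x ^ 3 - 16 * x ^ 4 - 16 * x ^ 5 + 16 * x ^ 6)
        + 2 * y * (-256 * x - 256 * x ^ 2 + 256 * x ^ 3 + 4 * x ^ 4 + 4 * x ^ 5 - 4 * x ^ 6)) * hr2
  have := mul_nonneg (sub_nonneg.2 hx) hfactor
  rw [← hdefect, mul_nonneg_iff_of_pos_right (by positivity)] at this
  linarith

lemma one_add_sq_rpow_div_two (u : ℝ) (n : ℕ) :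
    (1 + u ^ 2) ^ ((n : ℝ) / 2) = √(1 + u ^ 2) ^ n := by
  rw [rpow_div_two_eq_sqrt _ (by positivity), rpow_natCast]

lemma mParam_eq (u : ℝ) :
    mParam u = u ^ 3 * (8 - √(1 + u ^ 2) ^ 3) / (8 * u ^ 3 - √(1 + u ^ 2) ^ 3) := by
  rw [mParam, ← one_add_sq_rpow_div_two u 3]
  push_cast
  ring

lemma four_sub_phi1_sub_phi2 {u : ℝ} (hu : 0 < u) (hm : 0 ≤ mParam u) :
    4 - phi1 u - phi2 u = 2 - rhombusRatio (mParam u) u √(1 + u ^ 2) := by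
  have h52 : (1 + u ^ 2) ^ ((5 : ℝ) / 2) = √(1 + u ^ 2) ^ 5 := by
    exact_mod_cast one_add_sq_rpow_div_two u 5
  rw [phi1, phi2, rhombusRatio, muParam, h52]
  set s := √(1 + u ^ 2)
  set m := mParam u
  set α := alphaParam u
  have hs : 0 < s := by positivity
  have hs2 : s ^ 2 = 1 + u ^ 2 := sq_sqrt (by positivity)
  have hα : 0 < α := sqrt_pos.2 (by positivity)
  have hα2 : α ^ 2 = 2 * m * u ^ 2 + 2 := sq_sqrt (by positivity)
  field_simp
  linear_combination 4 * (m + 1) * u * (m * (8 * u + m * s) + u * s) *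
    (2 * (m * u ^ 2 + 1) * hs2 - (1 + u ^ 2) * hα2)

section Interval

variable {u : ℝ}

lemma sqrt_one_add_sq_cube_lt (hu : 0 < u) (h1 : 1 < 3 * u ^ 2) :
    √(1 + u ^ 2) ^ 3 < 8 * u ^ 3 := by
  have : √(1 + u ^ 2) < 2 * u := (sqrt_lt' (by positivity)).2 (by linarith)
  calc √(1 + u ^ 2) ^ 3 < (2 * u) ^ 3 := by gcongr
    _ = 8 * u ^ 3 := by ring

lemma sqrt_one_add_sq_cube_lt_eight (h3 : u ^ 2 < 3) : √(1 + u ^ 2) ^ 3 < 8 := by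
  have : √(1 + u ^ 2) < 2 := (sqrt_lt' (by norm_num)).2 (by linarith)
  calc √(1 + u ^ 2) ^ 3 < 2 ^ 3 := by gcongr
    _ = 8 := by norm_num

lemma mParam_pos (hu : 0 < u) (h1 : 1 < 3 * u ^ 2) (h3 : u ^ 2 < 3) : 0 < mParam u := by
  have hQ := sub_pos.2 (sqrt_one_add_sq_cube_lt hu h1)
  have hA := sub_pos.2 (sqrt_one_add_sq_cube_lt_eight h3)
  rw [mParam_eq]
  positivity

lemma one_le_rhombusRatio_mParam (hu : 0 < u) (h1 : 1 < 3 * u ^ 2) (h3 : u ^ 2 < 3) :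
    1 ≤ rhombusRatio (mParam u) u √(1 + u ^ 2) :=
  one_le_rhombusRatio hu (by positivity) (mParam_pos hu h1 h3).le (sq_sqrt (by positivity))
    (sqrt_one_add_sq_cube_lt hu h1).le (sqrt_one_add_sq_cube_lt_eight h3).le

lemma rhombusRatio_mParam_le (hu : 0 < u) (h1 : 1 < 3 * u ^ 2) (h3 : u ^ 2 < 3) :
    rhombusRatio (mParam u) u √(1 + u ^ 2) ≤ (16 - 4 * √2) / 7 := by
  set s := √(1 + u ^ 2)
  set x := (1 + u ^ 2) / u
  set y := s * (1 + u) / u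
  have hs2 : s ^ 2 = 1 + u ^ 2 := sq_sqrt (by positivity)
  have hx : u * x = 1 + u ^ 2 := mul_div_cancel₀ _ hu.ne'
  have hy : u * y = s * (1 + u) := mul_div_cancel₀ _ hu.ne'
  have hx2 : 2 ≤ x := by rw [le_div_iff₀ hu]; nlinarith [sq_nonneg (u - 1)]
  have hx73 : x ≤ 7 / 3 := by
    rw [div_le_iff₀ hu]
    nlinarith [mul_pos (sub_pos.2 h1) (sub_pos.2 h3)]
  have hxy : y ^ 2 = x ^ 2 + 2 * x := by
    simp only [x, y]
    field_simp
    linear_combination (1 + u) ^ 2 * hs2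
  have hkey := seven_mul_excessNum_le hx2 hx73 hxy (by positivity)
  have := rhombusRatio_le_of_excessNum_le (c := (9 - 4 * √2) / 7) hu (by positivity) hs2 hx hy
    (sqrt_one_add_sq_cube_lt hu h1) (sqrt_one_add_sq_cube_lt_eight h3) (by linarith)
  rw [mParam_eq]
  linarith

end Interval

/-- Bounds for `4 - φ₁(u) - φ₂(u)` on `(1/√3, √3)`. -/
theorem four_sub_phi_bounds (u : ℝ) (hu1 : 1 / Real.sqrt 3 < u) (hu2 : u < Real.sqrt 3) :
    (-2 + 4 * Real.sqrt 2) / 7 ≤ 4 - phi1 u - phi2 u ∧ 4 - phi1 u - phi2 u ≤ 1 := by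
  have hu : 0 < u := lt_trans (by positivity) hu1
  rw [one_div, ← sqrt_inv, sqrt_lt' hu] at hu1
  rw [lt_sqrt hu.le] at hu2
  have h1 : 1 < 3 * u ^ 2 := by linarith
  rw [four_sub_phi1_sub_phi2 hu (mParam_pos hu h1 hu2).le]
  constructor
  · linarith [rhombusRatio_mParam_le hu h1 hu2]
  · linarith [one_le_rhombusRatio_mParam hu h1 hu2]
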